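/- Let R be an integrally closed integral domain with quotient field K, and define E^* = ⋃{(EJ : J) : J a nonzero finitely generated fractional ideal of R}, where (EJ : J) = {x ∈ K : xJ ⊆ EJ}. Then R^* = R, and the restriction of * to the set of nonzero fractional ideals of R is a star operation of finite character on R. -/

import Mathlib

open Pointwise

/-- A *semistar operation* on a domain `S` with quotient field `M`. -/
structure IsSemistarOperation (S M : Type*) [CommRing S] [Field M] [Algebra S M]
    (star : Submodule S M → Submodule S M) : Prop where
  smul_eq : ∀ a : M, a ≠ 0 → ∀ E : Submodule S M, E ≠ ⊥ → star (a • E) = a • star E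
  le_star : ∀ E : Submodule S M, E ≠ ⊥ → E ≤ star E
  mono : ∀ E F : Submodule S M, E ≠ ⊥ → F ≠ ⊥ → E ≤ F → star E ≤ star F
  idem : ∀ E : Submodule S M, E ≠ ⊥ → star (star E) = star E

/-- A semistar operation has *finite character* if
`E^* = ⋃ {F^* : F nonzero finitely generated, F ⊆ E}`. -/
def SemistarFiniteCharacter (S M : Type*) [CommRing S] [Field M] [Algebra S M]
    (star : Submodule S M → Submodule S M) : Prop :=
  ∀ E : Submodule S M, E ≠ ⊥ → ∀ x : M,
    x ∈ star E ↔ ∃ F : Submodule S M, F ≠ ⊥ ∧ F.FG ∧ F ≤ E ∧ x ∈ star F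

/-- The set `E^* = ⋃ {(EJ : J) : J a nonzero finitely generated fractional ideal of S}`,
where `(EJ : J) = {x : xJ ⊆ EJ}`. -/
def bStarSet {S M : Type*} [CommRing S] [Field M] [Algebra S M] (E : Submodule S M) : Set M :=
  ⋃ J ∈ {J : Submodule S M | J ≠ ⊥ ∧ J.FG ∧ IsFractional (nonZeroDivisors S) J},
    (((E * J) / J : Submodule S M) : Set M)

variable {R K : Type*} [CommRing R] [IsDomain R] [Field K] [Algebra R K] [IsFractionRing R K]

/-- A *star operation* on a domain `S` with quotient field `M`. -/
structure IsStarOperation (S M : Type*) [CommRing S] [IsDomain S] [Field M] [Algebra S M]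
    [IsFractionRing S M]
    (star : FractionalIdeal (nonZeroDivisors S) M → FractionalIdeal (nonZeroDivisors S) M) :
    Prop where
  smul_eq : ∀ a : M, a ≠ 0 → ∀ I, I ≠ 0 →
    star (FractionalIdeal.spanSingleton (nonZeroDivisors S) a * I) =
      FractionalIdeal.spanSingleton (nonZeroDivisors S) a * star I
  le_star : ∀ I, I ≠ 0 → I ≤ star I
  mono : ∀ I J, I ≠ 0 → J ≠ 0 → I ≤ J → star I ≤ star J
  idem : ∀ I, I ≠ 0 → star (star I) = star I
  star_one : star 1 = 1

/-- A star operation has *finite character*. -/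
def StarFiniteCharacter (S M : Type*) [CommRing S] [IsDomain S] [Field M] [Algebra S M]
    [IsFractionRing S M]
    (star : FractionalIdeal (nonZeroDivisors S) M → FractionalIdeal (nonZeroDivisors S) M) :
    Prop :=
  ∀ I, I ≠ 0 → ∀ x : M,
    x ∈ star I ↔ ∃ J : FractionalIdeal (nonZeroDivisors S) M,
      J ≠ 0 ∧ (J : Submodule S M).FG ∧ J ≤ I ∧ x ∈ star J

/-! ### Auxiliary development -/

open Submodule in
/-- The predicate of being a nonzero finitely generated fractional ideal (as a submodule). -/
def s9Good (J : Submodule R K) : Prop :=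
  J ≠ ⊥ ∧ J.FG ∧ IsFractional (nonZeroDivisors R) J

lemma s9Good_one : s9Good (1 : Submodule R K) := by
  refine ⟨?_, ⟨{1}, by simp [Submodule.one_eq_span]⟩, ?_⟩
  · intro h
    have : (1 : K) ∈ (1 : Submodule R K) := Submodule.mem_one.mpr ⟨1, map_one _⟩
    rw [h] at this
    simpa using this
  · rw [← FractionalIdeal.coe_one (S := nonZeroDivisors R)]
    exact (1 : FractionalIdeal (nonZeroDivisors R) K).isFractional

lemma s9Good.mul {J J' : Submodule R K} (h : s9Good J) (h' : s9Good J') : s9Good (J * J') := by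
  obtain ⟨x, hx, hx0⟩ := (Submodule.ne_bot_iff J).mp h.1
  obtain ⟨y, hy, hy0⟩ := (Submodule.ne_bot_iff J').mp h'.1
  refine ⟨(Submodule.ne_bot_iff _).mpr ⟨x * y, Submodule.mul_mem_mul hx hy, mul_ne_zero hx0 hy0⟩,
    h.2.1.mul h'.2.1, h.2.2.mul h'.2.2⟩

instance : Nonempty {J : Submodule R K // s9Good J} := ⟨⟨1, s9Good_one⟩⟩

/-- The semistar operation `E ↦ ⋃ J, (EJ : J)` as a submodule. -/
def s9T (E : Submodule R K) : Submodule R K :=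
  ⨆ J : {J : Submodule R K // s9Good J}, (E * J.1) / J.1

lemma s9_div_le_div_mul (E J J' : Submodule R K) :
    (E * J) / J ≤ (E * (J * J')) / (J * J') := by
  intro x hx
  rw [Submodule.mem_div_iff_forall_mul_mem] at hx ⊢
  intro z hz
  refine Submodule.mul_induction_on hz (fun y hy w hw => ?_) (fun u v hu hv => ?_)
  · have h1 : x * y * w ∈ E * J * J' := Submodule.mul_mem_mul (hx y hy) hw
    rw [mul_assoc] at h1
    rw [show x * (y * w) = x * y * w from (mul_assoc x y w).symm]
    exact h1
  · rw [mul_add]; exact add_mem hu hv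

lemma s9_directed (E : Submodule R K) :
    Directed (· ≤ ·) fun J : {J : Submodule R K // s9Good J} => (E * J.1) / J.1 := by
  rintro ⟨J₁, h₁⟩ ⟨J₂, h₂⟩
  refine ⟨⟨J₁ * J₂, h₁.mul h₂⟩, s9_div_le_div_mul E J₁ J₂, ?_⟩
  have := s9_div_le_div_mul E J₂ J₁
  rwa [mul_comm J₂ J₁] at this

lemma s9_mem_T {E : Submodule R K} {x : K} :
    x ∈ s9T E ↔ ∃ J, s9Good J ∧ x ∈ (E * J) / J := by
  rw [s9T, ← SetLike.mem_coe, Submodule.coe_iSup_of_directed _ (s9_directed E)]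
  simp only [Set.mem_iUnion, SetLike.mem_coe, Subtype.exists]
  exact ⟨fun ⟨J, hJ, hx⟩ => ⟨J, hJ, hx⟩, fun ⟨J, hJ, hx⟩ => ⟨J, hJ, hx⟩⟩

lemma s9_coe_T (E : Submodule R K) : (s9T E : Set K) = bStarSet E := by
  ext x
  simp only [bStarSet, Set.mem_iUnion, SetLike.mem_coe, Set.mem_setOf_eq]
  rw [s9_mem_T]
  exact ⟨fun ⟨J, hJ, hx⟩ => ⟨J, hJ, hx⟩, fun ⟨J, hJ, hx⟩ => ⟨J, hJ, hx⟩⟩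

lemma s9_le_T_of_good {E J : Submodule R K} (h : s9Good J) : (E * J) / J ≤ s9T E :=
  fun _ hx => s9_mem_T.mpr ⟨J, h, hx⟩

lemma s9_le_T (E : Submodule R K) : E ≤ s9T E := by
  intro x hx
  refine s9_mem_T.mpr ⟨1, s9Good_one, ?_⟩
  rw [Submodule.mem_div_iff_forall_mul_mem]
  exact fun y hy => Submodule.mul_mem_mul hx hy

lemma s9_T_mono {E F : Submodule R K} (h : E ≤ F) : s9T E ≤ s9T F := by
  refine iSup_mono fun J => ?_
  intro x hx
  rw [Submodule.mem_div_iff_forall_mul_mem] at hx ⊢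
  exact fun y hy => mul_le_mul_left h _ (hx y hy)

lemma s9_mem_one_of_mul_self [IsIntegrallyClosed R] {J : Submodule R K} (hJ : s9Good J)
    {x : K} (hx : ∀ y ∈ J, x * y ∈ J) : x ∈ (1 : Submodule R K) := by
  have hint : IsIntegral R x :=
    isIntegral_of_smul_mem_submodule J hJ.1 hJ.2.1 x
      (fun n hn => by rw [smul_eq_mul]; exact hx n hn)
  obtain ⟨y, hy⟩ := IsIntegrallyClosed.isIntegral_iff.mp hint
  exact Submodule.mem_one.mpr ⟨y, hy⟩

lemma s9_T_one [IsIntegrallyClosed R] : s9T (1 : Submodule R K) = 1 := by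
  refine le_antisymm ?_ (s9_le_T 1)
  intro x hx
  obtain ⟨J, hJ, hxJ⟩ := s9_mem_T.mp hx
  rw [Submodule.mem_div_iff_forall_mul_mem, one_mul] at hxJ
  exact s9_mem_one_of_mul_self hJ hxJ

lemma s9_isFractional_T [IsIntegrallyClosed R] {E : Submodule R K}
    (hE : IsFractional (nonZeroDivisors R) E) :
    IsFractional (nonZeroDivisors R) (s9T E) := by
  obtain ⟨d, hd, hdE⟩ := hE
  refine ⟨d, hd, fun b hb => ?_⟩
  obtain ⟨J, hJ, hbJ⟩ := s9_mem_T.mp hb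
  rw [Submodule.mem_div_iff_forall_mul_mem] at hbJ
  have key : ∀ z ∈ E * J, algebraMap R K d * z ∈ J := by
    intro z hz
    refine Submodule.mul_induction_on hz (fun m hm n hn => ?_) (fun u v hu hv => ?_)
    · obtain ⟨r, hr⟩ := hdE m hm
      rw [Algebra.smul_def] at hr
      rw [← mul_assoc, ← hr, ← Algebra.smul_def]
      exact J.smul_mem r hn
    · rw [mul_add]; exact add_mem hu hv
  have hmul : ∀ y ∈ J, (algebraMap R K d * b) * y ∈ J := fun y hy => by
    rw [mul_assoc]; exact key _ (hbJ y hy)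
  obtain ⟨r, hr⟩ := Submodule.mem_one.mp (s9_mem_one_of_mul_self hJ hmul)
  exact ⟨r, by rw [hr, Algebra.smul_def]⟩

lemma s9_smul_mul (a : K) (E J : Submodule R K) : (a • E) * J = a • (E * J) := by
  rw [← Submodule.span_singleton_mul, ← Submodule.span_singleton_mul, mul_assoc]

lemma s9_div_smul {a : K} (ha : a ≠ 0) (X J : Submodule R K) :
    (a • X) / J = a • (X / J) := by
  ext x
  rw [Submodule.mem_smul_iff_inv_mul_mem ha, Submodule.mem_div_iff_forall_mul_mem,
    Submodule.mem_div_iff_forall_mul_mem]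
  constructor
  · intro h y hy
    have := (Submodule.mem_smul_iff_inv_mul_mem ha).mp (h y hy)
    rwa [← mul_assoc] at this
  · intro h y hy
    rw [Submodule.mem_smul_iff_inv_mul_mem ha, ← mul_assoc]
    exact h y hy

lemma s9_T_smul {a : K} (ha : a ≠ 0) (E : Submodule R K) :
    s9T (a • E) = a • s9T E := by
  ext x
  rw [Submodule.mem_smul_iff_inv_mul_mem ha, s9_mem_T, s9_mem_T]
  refine exists_congr fun J => and_congr_right fun _ => ?_
  rw [s9_smul_mul, s9_div_smul ha, Submodule.mem_smul_iff_inv_mul_mem ha]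

lemma s9_div_mul_le (X Y : Submodule R K) : X / Y * Y ≤ X :=
  Submodule.mul_le.mpr fun m hm n hn => Submodule.mem_div_iff_forall_mul_mem.mp hm n hn

lemma s9_exists_good_of_mem_mul {E J : Submodule R K} {y : K} (hy : y ∈ s9T E * J) :
    ∃ J₀, s9Good J₀ ∧ y ∈ ((E * J₀) / J₀) * J := by
  refine Submodule.mul_induction_on hy (fun m hm n hn => ?_) ?_
  · obtain ⟨J₀, g₀, hm'⟩ := s9_mem_T.mp hm
    exact ⟨J₀, g₀, Submodule.mul_mem_mul hm' hn⟩
  · rintro u v ⟨J₁, g₁, hu⟩ ⟨J₂, g₂, hv⟩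
    obtain ⟨⟨J₀, g₀⟩, hle₁, hle₂⟩ := s9_directed E ⟨J₁, g₁⟩ ⟨J₂, g₂⟩
    exact ⟨J₀, g₀, add_mem (mul_le_mul_left hle₁ _ hu)
      (mul_le_mul_left hle₂ _ hv)⟩

lemma s9_mul_mem_of_span {M : Submodule R K} {x : K} {s : Set K}
    (h : ∀ j ∈ s, x * j ∈ M) {y : K} (hy : y ∈ Submodule.span R s) : x * y ∈ M := by
  have hs : s ⊆ ↑(M.comap (LinearMap.mulLeft R x)) := fun j hj => by
    simpa [Submodule.mem_comap] using h j hj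
  simpa [Submodule.mem_comap] using Submodule.span_le.mpr hs hy

lemma s9_T_idem (E : Submodule R K) : s9T (s9T E) = s9T E := by
  classical
  refine le_antisymm ?_ (s9_le_T _)
  intro x hx
  obtain ⟨J, hJ, hxJ⟩ := s9_mem_T.mp hx
  obtain ⟨s, hs⟩ := hJ.2.1
  rw [Submodule.mem_div_iff_forall_mul_mem] at hxJ
  have hstep : ∀ t : Finset K, (∀ j ∈ t, j ∈ J) →
      ∃ J₀, s9Good J₀ ∧ ∀ j ∈ t, x * j ∈ ((E * J₀) / J₀) * J := by
    intro t
    induction t using Finset.induction_on with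
    | empty => exact fun _ => ⟨1, s9Good_one, by simp⟩
    | @insert a t hat ih =>
      intro hmem
      obtain ⟨J₁, g₁, h₁⟩ := ih fun j hj => hmem j (Finset.mem_insert_of_mem hj)
      obtain ⟨J₂, g₂, h₂⟩ :=
        s9_exists_good_of_mem_mul (hxJ a (hmem a (Finset.mem_insert_self a t)))
      obtain ⟨⟨J₀, g₀⟩, hle₁, hle₂⟩ := s9_directed E ⟨J₁, g₁⟩ ⟨J₂, g₂⟩
      refine ⟨J₀, g₀, fun j hj => ?_⟩
      rcases Finset.mem_insert.mp hj with rfl | hj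
      · exact mul_le_mul_left hle₂ _ h₂
      · exact mul_le_mul_left hle₁ _ (h₁ j hj)
  obtain ⟨J₀, g₀, h₀⟩ := hstep s fun j hj => hs ▸ Submodule.subset_span hj
  have hall : ∀ y ∈ J, x * y ∈ ((E * J₀) / J₀) * J := by
    intro y hy
    rw [← hs] at hy
    exact s9_mul_mem_of_span (fun j hj => h₀ j hj) hy
  refine s9_mem_T.mpr ⟨J * J₀, hJ.mul g₀, ?_⟩
  rw [Submodule.mem_div_iff_forall_mul_mem]
  have hle : ((E * J₀) / J₀) * J * J₀ ≤ E * (J * J₀) := by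
    rw [mul_right_comm]
    calc ((E * J₀) / J₀) * J₀ * J ≤ (E * J₀) * J :=
          mul_le_mul_left (s9_div_mul_le _ _) _
      _ = E * (J * J₀) := by rw [mul_assoc, mul_comm J₀ J]
  intro z hz
  refine Submodule.mul_induction_on hz (fun y hy w hw => ?_) (fun u v hu hv => ?_)
  · rw [show x * (y * w) = x * y * w from (mul_assoc x y w).symm]
    exact hle (Submodule.mul_mem_mul (hall y hy) hw)
  · rw [mul_add]; exact add_mem hu hv

lemma s9_exists_fg_of_mem_mul {E J : Submodule R K} {y : K} (hy : y ∈ E * J) :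
    ∃ F : Submodule R K, F.FG ∧ F ≤ E ∧ y ∈ F * J := by
  refine Submodule.mul_induction_on hy (fun m hm n hn =>
    ⟨Submodule.span R {m}, Submodule.fg_span_singleton m,
      Submodule.span_le.mpr (Set.singleton_subset_iff.mpr hm),
      Submodule.mul_mem_mul (Submodule.mem_span_singleton_self m) hn⟩) ?_
  rintro u v ⟨F₁, h₁, l₁, m₁⟩ ⟨F₂, h₂, l₂, m₂⟩
  exact ⟨F₁ ⊔ F₂, h₁.sup h₂, sup_le l₁ l₂,
    add_mem (mul_le_mul_left (le_sup_left (a := F₁) (b := F₂)) J m₁)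
      (mul_le_mul_left (le_sup_right (a := F₁) (b := F₂)) J m₂)⟩

lemma s9_isFractional_of_le {E F : Submodule R K} (h : E ≤ F)
    (hF : IsFractional (nonZeroDivisors R) F) : IsFractional (nonZeroDivisors R) E := by
  obtain ⟨d, hd, hF⟩ := hF
  exact ⟨d, hd, fun b hb => hF b (h hb)⟩

/-- The star operation on fractional ideals. -/
noncomputable def s9Star [IsIntegrallyClosed R]
    (I : FractionalIdeal (nonZeroDivisors R) K) : FractionalIdeal (nonZeroDivisors R) K :=
  ⟨s9T (I : Submodule R K), s9_isFractional_T I.isFractional⟩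

lemma s9_coe_star [IsIntegrallyClosed R] (I : FractionalIdeal (nonZeroDivisors R) K) :
    (s9Star I : Submodule R K) = s9T (I : Submodule R K) := rfl

/-- if `R` is integrally closed then `R^* = R` and the restriction of
`E ↦ ⋃ {(EJ : J)}` to the nonzero fractional ideals of `R` is a star operation of
finite character on `R`. -/
theorem statement9 [IsIntegrallyClosed R] :
    bStarSet (1 : Submodule R K) = ((1 : Submodule R K) : Set K) ∧
      ∃ star : FractionalIdeal (nonZeroDivisors R) K → FractionalIdeal (nonZeroDivisors R) K,
        IsStarOperation R K star ∧ StarFiniteCharacter R K star ∧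
          ∀ I : FractionalIdeal (nonZeroDivisors R) K, I ≠ 0 →
            ((star I : Submodule R K) : Set K) = bStarSet (I : Submodule R K) := by
  classical
  constructor
  · rw [← s9_coe_T, s9_T_one]
  refine ⟨s9Star, ⟨?_, ?_, ?_, ?_, ?_⟩, ?_, fun I _ => s9_coe_T _⟩
  · -- smul_eq
    intro a ha I _
    apply FractionalIdeal.coeToSubmodule_injective
    simp only [s9_coe_star, FractionalIdeal.coe_mul, FractionalIdeal.coe_spanSingleton,
      Submodule.span_singleton_mul]
    exact s9_T_smul ha _
  · -- le_star
    intro I _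
    exact FractionalIdeal.coe_le_coe.mp (s9_le_T _)
  · -- mono
    intro I J _ _ h
    exact FractionalIdeal.coe_le_coe.mp (s9_T_mono (FractionalIdeal.coe_le_coe.mpr h))
  · -- idem
    intro I _
    exact FractionalIdeal.coeToSubmodule_injective (s9_T_idem _)
  · -- star_one
    refine FractionalIdeal.coeToSubmodule_injective ?_
    beta_reduce
    rw [s9_coe_star, FractionalIdeal.coe_one]
    exact s9_T_one
  · -- finite character
    intro I hI x
    constructor
    · intro hx
      have hx' : x ∈ s9T (I : Submodule R K) := hx
      obtain ⟨J, gJ, hxJ⟩ := s9_mem_T.mp hx'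
      obtain ⟨s, hs⟩ := gJ.2.1
      rw [Submodule.mem_div_iff_forall_mul_mem] at hxJ
      have hstep : ∀ t : Finset K, (∀ j ∈ t, j ∈ J) →
          ∃ F : Submodule R K, F.FG ∧ F ≤ (I : Submodule R K) ∧ ∀ j ∈ t, x * j ∈ F * J := by
        intro t
        induction t using Finset.induction_on with
        | empty => exact fun _ => ⟨⊥, Submodule.fg_bot, bot_le, by simp⟩
        | @insert a t hat ih =>
          intro hmem
          obtain ⟨F₁, f₁, l₁, m₁⟩ := ih fun j hj => hmem j (Finset.mem_insert_of_mem hj)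
          obtain ⟨F₂, f₂, l₂, m₂⟩ :=
            s9_exists_fg_of_mem_mul (hxJ a (hmem a (Finset.mem_insert_self a t)))
          refine ⟨F₁ ⊔ F₂, f₁.sup f₂, sup_le l₁ l₂, fun j hj => ?_⟩
          rcases Finset.mem_insert.mp hj with rfl | hj
          · exact mul_le_mul_left (le_sup_right (a := F₁) (b := F₂)) J m₂
          · exact mul_le_mul_left (le_sup_left (a := F₁) (b := F₂)) J (m₁ j hj)
      obtain ⟨F, hF, hFle, hFmem⟩ := hstep s fun j hj => hs ▸ Submodule.subset_span hj
      have hIbot : (I : Submodule R K) ≠ ⊥ := by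
        rwa [Ne, FractionalIdeal.coeToSubmodule_eq_bot]
      obtain ⟨e, he, he0⟩ := (Submodule.ne_bot_iff _).mp hIbot
      set F' := F ⊔ Submodule.span R {e} with hF'
      have hfg' : F'.FG := hF.sup (Submodule.fg_span_singleton e)
      have hle' : F' ≤ (I : Submodule R K) :=
        sup_le hFle (Submodule.span_le.mpr (Set.singleton_subset_iff.mpr he))
      have hbot' : F' ≠ ⊥ := (Submodule.ne_bot_iff _).mpr
        ⟨e, (le_sup_right : _ ≤ F') (Submodule.mem_span_singleton_self e), he0⟩
      have hmem' : ∀ y ∈ J, x * y ∈ F' * J := by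
        intro y hy
        rw [← hs] at hy
        exact s9_mul_mem_of_span
          (fun j hj => mul_le_mul_left (le_sup_left (a := F) (b := Submodule.span R {e})) J (hFmem j hj)) hy
      refine ⟨⟨F', s9_isFractional_of_le hle' I.isFractional⟩, ?_, hfg', ?_, ?_⟩
      · exact fun h => hbot' (FractionalIdeal.coeToSubmodule_eq_bot.mpr h)
      · exact FractionalIdeal.coe_le_coe.mp hle'
      · show x ∈ s9T F'
        exact s9_le_T_of_good gJ (Submodule.mem_div_iff_forall_mul_mem.mpr hmem')
    · rintro ⟨J', hJ'0, _, hJ'le, hxJ'⟩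
      have hmono : s9Star J' ≤ s9Star I :=
        FractionalIdeal.coe_le_coe.mp (s9_T_mono (FractionalIdeal.coe_le_coe.mpr hJ'le))
      exact hmono hxJ'
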